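/- arXiv:1910.11453 — 2 statements merged into one kernel-verified Lean document; each statement's English description precedes it below -/
import Mathlib

section
/- Let F be the free group on e generators x_1, …, x_e, let H be a finite group, and let ψ: F → H be a surjective homomorphism with kernel M. Then for every finite group L generated by e elements and every surjective homomorphism τ: L → H whose kernel is an elementary abelian p-group, there exists a surjective homomorphism β: F → L with τ ∘ β = ψ and M_p ≤ ker β; in particular, L is isomorphic to a quotient of F/M_p. -/
/-!
Gaschütz's lemma: for a surjection `τ : L → H` of finite groups, the number of generating tuples
of `L` lying over a generating tuple `h` of `H` does not depend on `h`. This is proved by induction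
over the subgroups `U` with `τ(U) = H`: the tuples of elements of `U` over `h` form a translate of
those over `1`, so their number does not depend on `h`; they are partitioned according to the
subgroup `V ≤ U` they generate, and only the `V` with `τ(V) = H` contribute.

Since `τ ∘ f` has the generating lift `f`, the tuple `ψ(x₁), …, ψ(xₑ)` has a generating lift `u`,
and `β : xᵢ ↦ uᵢ` is a surjection with `τ ∘ β = ψ`. It maps `M` into the elementary abelian group
`ker τ`, hence kills all commutators and `p`-th powers of elements of `M`.
-/

open scoped commutatorElement

/-- For a subgroup `N` of `F`, `subgroupP p N = [N,N]·N^{[p]}` is the subgroup generated by all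
commutators `⁅a,b⁆` with `a b ∈ N` and all `p`-th powers `a ^ p` with `a ∈ N`. -/
def subgroupP (p : ℕ) {F : Type*} [Group F] (N : Subgroup F) : Subgroup F :=
  Subgroup.closure ({x | ∃ a ∈ N, ∃ b ∈ N, x = ⁅a, b⁆} ∪ {x | ∃ a ∈ N, x = a ^ p})

/-- If `N` is normal in `F`, then so is `subgroupP p N`. -/
instance subgroupP_normal (p : ℕ) {F : Type*} [Group F] (N : Subgroup F) [hN : N.Normal] :
    (subgroupP p N).Normal := by
  constructor
  intro n hn g
  have h1 : (subgroupP p N).map (MulAut.conj g).toMonoidHom ≤ subgroupP p N := by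
    rw [subgroupP, MonoidHom.map_closure]
    apply Subgroup.closure_mono
    rintro x ⟨y, hy, rfl⟩
    rcases hy with ⟨a, ha, b, hb, rfl⟩ | ⟨a, ha, rfl⟩
    · exact Or.inl ⟨g * a * g⁻¹, hN.conj_mem a ha g, g * b * g⁻¹, hN.conj_mem b hb g,
        by simp [map_commutatorElement]⟩
    · exact Or.inr ⟨g * a * g⁻¹, hN.conj_mem a ha g, by simp [map_pow]⟩
  exact h1 ⟨n, hn, rfl⟩

open Set

theorem Subgroup.closure_range_comp_eq_top {ι G H : Type*} [Group G] [Group H] {φ : G →* H}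
    (hφ : Function.Surjective φ) {f : ι → G} (hf : closure (range f) = ⊤) :
    closure (range (φ ∘ f)) = ⊤ := by
  rw [range_comp, ← MonoidHom.map_closure, hf, Subgroup.map_top_of_surjective φ hφ]

theorem subgroupP_le_ker {p : ℕ} {F G : Type*} [Group F] [Group G] {N : Subgroup F}
    {K : Subgroup G} (φ : F →* G) (hNK : N ≤ K.comap φ) (hab : ∀ a b : K, a * b = b * a)
    (hexp : ∀ g : K, g ^ p = 1) : subgroupP p N ≤ φ.ker := by
  rw [subgroupP, Subgroup.closure_le]
  rintro _ (⟨a, ha, b, hb, rfl⟩ | ⟨a, ha, rfl⟩)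
  · have := hab ⟨φ a, hNK ha⟩ ⟨φ b, hNK hb⟩
    rw [SetLike.mem_coe, MonoidHom.mem_ker, map_commutatorElement,
      commutatorElement_eq_one_iff_commute]
    exact congrArg Subtype.val this
  · simpa using congrArg Subtype.val (hexp ⟨φ a, hNK ha⟩)

namespace MonoidHom

variable {ι L H : Type*} [Group L] [Group H] (τ : L →* H) (h : ι → H) (U : Subgroup L)

def generatingLifts : Set (ι → L) :=
  {u | τ ∘ u = h ∧ Subgroup.closure (Set.range u) = U}

def liftsInto : Set (ι → L) :=
  {u | τ ∘ u = h ∧ ∀ i, u i ∈ U}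

variable {τ h U}

theorem generatingLifts_eq_empty (hh : Subgroup.closure (Set.range h) = ⊤) (hU : U.map τ ≠ ⊤) :
    generatingLifts τ h U = ∅ :=
  eq_empty_of_forall_notMem fun _ hu =>
    hU (by rw [← hu.2, map_closure, ← Set.range_comp, hu.1, hh])

theorem liftsInto_eq_biUnion : liftsInto τ h U = ⋃ V ∈ Iic U, generatingLifts τ h V := by
  ext u
  simp [liftsInto, generatingLifts, Subgroup.closure_le, range_subset_iff, and_comm]

theorem ncard_liftsInto_eq_finsum [Finite ι] [Finite L] :
    (liftsInto τ h U).ncard = ∑ᶠ V ∈ Iic U, (generatingLifts τ h V).ncard := by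
  rw [liftsInto_eq_biUnion]
  refine (toFinite _).ncard_biUnion (fun _ _ => Set.toFinite _) fun V _ W _ hVW => ?_
  exact disjoint_left.2 fun u hV hW => hVW (hV.2.symm.trans hW.2)

theorem ncard_liftsInto_eq (hU : U.map τ = ⊤) (h' : ι → H) :
    (liftsInto τ h U).ncard = (liftsInto τ h' U).ncard := by
  have hc : ∀ i, ∃ c ∈ U, τ c = (h i)⁻¹ * h' i := fun i =>
    Subgroup.mem_map.1 (hU ▸ Subgroup.mem_top _)
  choose c hcU hτc using hc
  have hpre : (· * c) ⁻¹' liftsInto τ h' U = liftsInto τ h U := by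
    ext u
    simp [liftsInto, funext_iff, hτc, U.mul_mem_cancel_right (hcU _), ← mul_assoc,
      mul_inv_eq_one]
  rw [← hpre, ncard_preimage_of_injective_subset_range (mul_left_injective c)]
  exact fun u _ => ⟨u * c⁻¹, inv_mul_cancel_right u c⟩

theorem ncard_generatingLifts_eq [Finite ι] [Finite L] {h' : ι → H}
    (hh : Subgroup.closure (Set.range h) = ⊤) (hh' : Subgroup.closure (Set.range h') = ⊤)
    (hU : U.map τ = ⊤) :
    (generatingLifts τ h U).ncard = (generatingLifts τ h' U).ncard := by
  induction U using WellFoundedLT.induction with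
  | ind U IH =>
  have hsplit := ncard_liftsInto_eq (h := h) hU h'
  rw [ncard_liftsInto_eq_finsum, ncard_liftsInto_eq_finsum, ← Iio_insert,
    finsum_mem_insert _ self_notMem_Iio (toFinite _),
    finsum_mem_insert _ self_notMem_Iio (toFinite _)] at hsplit
  have hsmaller : ∑ᶠ V ∈ Iio U, (generatingLifts τ h V).ncard =
      ∑ᶠ V ∈ Iio U, (generatingLifts τ h' V).ncard := by
    refine finsum_mem_congr rfl fun V hV => ?_
    by_cases hVτ : V.map τ = ⊤
    · exact IH V hV hVτ
    · rw [generatingLifts_eq_empty hh hVτ, generatingLifts_eq_empty hh' hVτ]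
  omega

theorem exists_generatingLift [Finite ι] [Finite L] (hτ : Function.Surjective τ) {f : ι → L}
    (hf : Subgroup.closure (Set.range f) = ⊤) (hh : Subgroup.closure (Set.range h) = ⊤) :
    ∃ u : ι → L, τ ∘ u = h ∧ Subgroup.closure (Set.range u) = ⊤ := by
  have hf_mem : f ∈ generatingLifts τ (τ ∘ f) ⊤ := ⟨rfl, hf⟩
  have hcard := ncard_generatingLifts_eq hh (Subgroup.closure_range_comp_eq_top hτ hf)
    (Subgroup.map_top_of_surjective τ hτ)
  exact nonempty_of_ncard_ne_zero (hcard ▸ ((ncard_pos (toFinite _)).2 ⟨f, hf_mem⟩).ne')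

end MonoidHom

theorem stmt_2_general (e p : ℕ) (H : Type) [Group H]
    (ψ : FreeGroup (Fin e) →* H) (hψ : Function.Surjective ψ)
    (L : Type) [Group L] [Finite L]
    (hL : ∃ f : Fin e → L, Subgroup.closure (Set.range f) = ⊤)
    (τ : L →* H) (hτ : Function.Surjective τ)
    (hab : ∀ a b : τ.ker, a * b = b * a) (hexp : ∀ g : τ.ker, g ^ p = 1) :
    (∃ β : FreeGroup (Fin e) →* L,
      Function.Surjective β ∧ τ.comp β = ψ ∧ subgroupP p ψ.ker ≤ β.ker) ∧
    ∃ φ : (FreeGroup (Fin e) ⧸ subgroupP p ψ.ker) →* L, Function.Surjective φ := by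
  obtain ⟨f, hf⟩ := hL
  have hgen : Subgroup.closure (Set.range (ψ ∘ FreeGroup.of)) = ⊤ :=
    Subgroup.closure_range_comp_eq_top hψ (FreeGroup.closure_range_of _)
  obtain ⟨u, hτu, hu⟩ := τ.exists_generatingLift hτ hf hgen
  set β := FreeGroup.lift u
  have hβ : Function.Surjective β := FreeGroup.lift_surjective_iff_closure_range_eq_top.2 hu
  have hτβ : τ.comp β = ψ := FreeGroup.ext_hom _ _ fun i => by simpa [β] using congrFun hτu i
  have hker : subgroupP p ψ.ker ≤ β.ker :=
    subgroupP_le_ker β (hτβ ▸ (MonoidHom.comap_ker τ β).ge) hab hexp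
  exact ⟨⟨β, hβ, hτβ, hker⟩, _, QuotientGroup.lift_surjective_of_surjective _ β hβ hker⟩

/-- Every finite `e`-generated extension `L` of `H` with elementary abelian `p`-kernel is a
quotient of `F ⧸ M_p` where `M = ker ψ` for a surjection `ψ` from the free group `F` of rank
`e`: the lift `β : F → L` can be chosen with `τ ∘ β = ψ` and `M_p ≤ ker β`. -/
theorem stmt_2 (e p : ℕ) (he : 0 < e) (hp : p.Prime) (H : Type) [Group H] [Finite H]
    (ψ : FreeGroup (Fin e) →* H) (hψ : Function.Surjective ψ)
    (L : Type) [Group L] [Finite L]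
    (hL : ∃ f : Fin e → L, Subgroup.closure (Set.range f) = ⊤)
    (τ : L →* H) (hτ : Function.Surjective τ)
    (hab : ∀ a b : τ.ker, a * b = b * a) (hexp : ∀ g : τ.ker, g ^ p = 1) :
    (∃ β : FreeGroup (Fin e) →* L,
      Function.Surjective β ∧ τ.comp β = ψ ∧ subgroupP p ψ.ker ≤ β.ker) ∧
    ∃ φ : (FreeGroup (Fin e) ⧸ subgroupP p ψ.ker) →* L, Function.Surjective φ :=
  stmt_2_general e p H ψ hψ L hL τ hτ hab hexp
end

section
/- Let F be the free group on e generators, let H be a finite group of order m, and let ψ: F → H be a surjective homomorphism with kernel M. Then the quotient M/M_p is an elementary abelian p-group of order p^{1+(e-1)m}. -/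
open scoped commutatorElement

instance subgroupP_subgroupOf_normal (p : ℕ) {F : Type*} [Group F] (N : Subgroup F)
    [hN : N.Normal] : ((subgroupP p N).subgroupOf N).Normal := by
  constructor
  intro n hn g
  rw [Subgroup.mem_subgroupOf] at hn ⊢
  simpa using (subgroupP_normal p N).conj_mem _ hn g

/-! By Nielsen–Schreier `M` is free, and for a free group `K` the quotient `K/K_p` is the
`𝔽_p`-vector space on a basis of `K`; so `|M/M_p| = |Hom(M, ℤ/p)|`. Homomorphisms from `M` to a
group `X` are counted in the action groupoid of `F` on `F/M`, which has `m` objects, is free on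
the `e·m` arrows `x ⟶ s • x` (`s` a generator), and has vertex group `M` at the coset `M`.
A functor from it to `X` is an arbitrary labelling of these `e·m` arrows; it is also a
homomorphism `M → X` together with arbitrary values on `m - 1` fixed arrows out of the base
point. Hence `|Hom(M, X)| · |X|^(m-1) = |X|^(e·m)`. -/

section SubgroupP

variable (p : ℕ) {K : Type*} [Group K]

lemma commutator_mem_subgroupP {N : Subgroup K} {a b : K} (ha : a ∈ N) (hb : b ∈ N) :
    ⁅a, b⁆ ∈ subgroupP p N :=
  Subgroup.subset_closure (Or.inl ⟨a, ha, b, hb, rfl⟩)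

lemma pow_mem_subgroupP {N : Subgroup K} {a : K} (ha : a ∈ N) : a ^ p ∈ subgroupP p N :=
  Subgroup.subset_closure (Or.inr ⟨a, ha, rfl⟩)

lemma map_subgroupP {L : Type*} [Group L] (f : K →* L) (N : Subgroup K) :
    (subgroupP p N).map f = subgroupP p (N.map f) := by
  rw [subgroupP, subgroupP, MonoidHom.map_closure, Set.image_union]
  congr 2 <;> ext x <;> simp [map_commutatorElement, eq_comm, and_assoc]

lemma subgroupP_subgroupOf (N : Subgroup K) :
    (subgroupP p N).subgroupOf N = subgroupP p (⊤ : Subgroup N) := by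
  rw [← Subgroup.comap_map_eq_self_of_injective N.subtype_injective (subgroupP p ⊤),
    map_subgroupP, ← MonoidHom.range_eq_map, Subgroup.range_subtype, Subgroup.subgroupOf]

instance : CommGroup (K ⧸ subgroupP p (⊤ : Subgroup K)) where
  mul_comm := by
    rintro ⟨x⟩ ⟨y⟩
    refine (QuotientGroup.eq (s := subgroupP p ⊤)).2 ?_
    have : (x * y)⁻¹ * (y * x) = ⁅y⁻¹, x⁻¹⁆ := by rw [commutatorElement_def]; group
    exact this ▸ commutator_mem_subgroupP p trivial trivial

lemma quotient_subgroupP_pow_eq_one (a : K ⧸ subgroupP p (⊤ : Subgroup K)) : a ^ p = 1 := by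
  induction a using QuotientGroup.induction_on with
  | H x => exact (QuotientGroup.eq_one_iff _).2 (pow_mem_subgroupP p trivial)

end SubgroupP

lemma Nat.card_finsupp_eq_card_fun (ι M : Type*) [Zero M] :
    Nat.card (ι →₀ M) = Nat.card (ι → M) := by
  rcases finite_or_infinite ι with hι | hι
  · exact Nat.card_congr Finsupp.equivFunOnFinite
  rcases subsingleton_or_nontrivial M with hM | hM
  · simp
  · simp [Nat.card_eq_zero_of_infinite]

namespace FreeGroupBasis

variable {ι K : Type*} [Group K] (b : FreeGroupBasis ι K) (p : ℕ)

noncomputable def toFinsuppZMod : K →* Multiplicative (ι →₀ ZMod p) :=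
  b.lift fun i => .ofAdd (Finsupp.single i 1)

@[simp]
lemma toFinsuppZMod_apply (i : ι) :
    b.toFinsuppZMod p (b i) = .ofAdd (Finsupp.single i 1) := by
  simp [toFinsuppZMod]

lemma toFinsuppZMod_surjective : Function.Surjective (b.toFinsuppZMod p) := by
  suffices ∀ v : ι →₀ ZMod p, ∃ x, b.toFinsuppZMod p x = .ofAdd v from
    fun v => this v.toAdd
  intro v
  induction v using Finsupp.induction with
  | zero => exact ⟨1, map_one _⟩
  | single_add i c v _ _ ih =>
    obtain ⟨x, hx⟩ := ih
    refine ⟨b i ^ (c.cast : ℤ) * x, ?_⟩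
    rw [map_mul, map_zpow, toFinsuppZMod_apply, hx, ← ofAdd_zsmul, ← ofAdd_add,
      Finsupp.smul_single, zsmul_eq_mul, mul_one, ZMod.intCast_zmod_cast]

lemma ker_toFinsuppZMod : (b.toFinsuppZMod p).ker = subgroupP p ⊤ := by
  apply le_antisymm
  -- `K ⧸ K_p` is a `ZMod p`-module, so the quotient map factors through `toFinsuppZMod`
  · let Q := K ⧸ subgroupP p (⊤ : Subgroup K)
    let _ : Module (ZMod p) (Additive Q) := AddCommGroup.zmodModule fun x =>
      Additive.toMul.injective (quotient_subgroupP_pow_eq_one p x.toMul)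
    let g : Multiplicative (ι →₀ ZMod p) →* Q := AddMonoidHom.toMultiplicativeLeft
      (Finsupp.linearCombination (ZMod p) fun i => Additive.ofMul (b i : Q)).toAddMonoidHom
    have hg : g.comp (b.toFinsuppZMod p) = QuotientGroup.mk' _ :=
      b.ext_hom _ _ fun i => by simp [g]; rfl
    intro x hx
    rw [← QuotientGroup.eq_one_iff, ← QuotientGroup.mk'_apply, ← hg, MonoidHom.comp_apply,
      hx, map_one]
  · rw [subgroupP, Subgroup.closure_le]
    rintro x (⟨a, -, c, -, rfl⟩ | ⟨a, -, rfl⟩)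
    · rw [SetLike.mem_coe, MonoidHom.mem_ker, map_commutatorElement]
      exact commutatorElement_eq_one_iff_commute.2 (Commute.all _ _)
    · rw [SetLike.mem_coe, MonoidHom.mem_ker, map_pow, ← ofAdd_toAdd (b.toFinsuppZMod p a),
        ← ofAdd_nsmul]
      ext i
      simp

noncomputable def quotientSubgroupPEquiv :
    K ⧸ subgroupP p (⊤ : Subgroup K) ≃* Multiplicative (ι →₀ ZMod p) :=
  (QuotientGroup.quotientMulEquivOfEq (b.ker_toFinsuppZMod p).symm).trans
    (QuotientGroup.quotientKerEquivOfSurjective _ (b.toFinsuppZMod_surjective p))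

end FreeGroupBasis

lemma IsFreeGroup.card_quotient_subgroupP (p : ℕ) (K : Type*) [Group K] [IsFreeGroup K] :
    Nat.card (K ⧸ subgroupP p (⊤ : Subgroup K)) =
      Nat.card (K →* Multiplicative (ZMod p)) := by
  rw [Nat.card_congr ((basis K).quotientSubgroupPEquiv p).toEquiv,
    Nat.card_congr (basis K).lift.symm]
  exact Nat.card_finsupp_eq_card_fun _ (ZMod p)

universe u v

open CategoryTheory

namespace CategoryTheory

variable {G : Type u} [Groupoid.{v} G] {X : Type v} [Group X]

def Functor.vertexHom (F : G ⥤ SingleObj X) (r : G) : End r →* X where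
  toFun γ := F.map γ
  map_one' := F.map_id r
  map_mul' γ δ := F.map_comp δ γ

noncomputable def functorOfVertexHom {r : G} (c : ∀ a, r ⟶ a) (f : End r →* X) (x : G → X) :
    G ⥤ SingleObj X where
  obj _ := ()
  map {a b} g := x b * f (c a ≫ g ≫ inv (c b)) * (x a)⁻¹
  map_id a := by
    rw [Category.id_comp, IsIso.hom_inv_id, ← End.one_def, map_one, mul_one, mul_inv_cancel,
      SingleObj.id_as_one]
  map_comp {a b d} g h := by
    have hf : f (c a ≫ (g ≫ h) ≫ inv (c d)) =
        f (c b ≫ h ≫ inv (c d)) * f (c a ≫ g ≫ inv (c b)) := by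
      rw [← map_mul, End.mul_def]
      simp
    rw [SingleObj.comp_as_mul, hf]
    group

/-- Gauge fixing: once an arrow `c a : r ⟶ a` is fixed for every object, with `c r = 𝟙 r`,
a functor is determined by its restriction to the vertex group and its values on the `c a`. -/
noncomputable def functorEquivVertexHom (r : G) (c : ∀ a, r ⟶ a) (hc : c r = 𝟙 r) :
    (G ⥤ SingleObj X) ≃ (End r →* X) × ({a // a ≠ r} → X) where
  toFun F := (F.vertexHom r, fun a => F.map (c a))
  invFun fx := functorOfVertexHom c fx.1 (Function.extend Subtype.val fx.2 1)
  left_inv F := by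
    refine Functor.ext (fun _ => rfl) fun a b g => ?_
    have hx : ∀ a, Function.extend Subtype.val (fun a : {a // a ≠ r} => (F.map (c a) : X)) 1 a =
        F.map (c a) := by
      intro a
      by_cases h : a = r
      · subst h
        rw [Function.extend_apply' _ _ _ fun ⟨a', ha'⟩ => a'.2 ha', hc, F.map_id]
        rfl
      · exact Subtype.val_injective.extend_apply _ _ (⟨a, h⟩ : {a // a ≠ r})
    simp only [functorOfVertexHom, Functor.vertexHom, MonoidHom.coe_mk, OneHom.coe_mk, hx,
      Functor.map_comp, Functor.map_inv, SingleObj.comp_as_mul, SingleObj.inv_as_inv,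
      eqToHom_refl, Category.id_comp, Category.comp_id]
    group
  right_inv := by
    rintro ⟨f, x⟩
    have hr : Function.extend Subtype.val x 1 r = 1 :=
      Function.extend_apply' _ _ _ fun ⟨a', ha'⟩ => a'.2 ha'
    refine Prod.ext (MonoidHom.ext fun γ => ?_) (funext fun a => ?_)
    · simp [functorOfVertexHom, Functor.vertexHom, hc]
    · simp only [functorOfVertexHom, hr, hc, Subtype.val_injective.extend_apply,
        Category.id_comp, IsIso.hom_inv_id, inv_one, mul_one]
      rw [← End.one_def, map_one, mul_one]

lemma exists_homs_from_eq_id [IsPreconnected G] (r : G) : ∃ c : ∀ a, r ⟶ a, c r = 𝟙 r := by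
  classical
  refine ⟨fun a => if h : r = a then eqToHom h
    else (nonempty_hom_of_preconnected_groupoid r a).some, ?_⟩
  simp

lemma card_functor_singleObj_of_isConnected [IsConnected G] [Finite G] (r : G) :
    Nat.card (G ⥤ SingleObj X) = Nat.card (End r →* X) * Nat.card X ^ (Nat.card G - 1) := by
  classical
  obtain ⟨c, hc⟩ := exists_homs_from_eq_id r
  have := Fintype.ofFinite G
  rw [Nat.card_congr (functorEquivVertexHom r c hc), Nat.card_prod, Nat.card_fun]
  simp only [Nat.card_eq_fintype_card, Fintype.card_subtype_compl, Fintype.card_unique]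

end CategoryTheory

def Quiver.labellingEquivTotal (V : Type*) [Quiver V] (L : Type*) :
    Quiver.Labelling V L ≃ (Quiver.Total V → L) where
  toFun f t := f t.hom
  invFun g _ _ e := g ⟨_, _, e⟩

namespace IsFreeGroupoid

variable {G : Type u} [Groupoid.{v} G] [IsFreeGroupoid G] {X : Type v} [Group X]

noncomputable def functorEquivLabelling :
    (G ⥤ SingleObj X) ≃ Quiver.Labelling (Generators G) X :=
  Equiv.ofBijective (fun F _ _ e => F.map (of e))
    ⟨fun F F' h => ext_functor F F' fun a b e => congrFun (congrFun (congrFun h a) b) e,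
      fun f => (unique_lift f).exists.imp fun _ hF => funext fun a => funext fun b =>
        funext (hF a b)⟩

lemma card_functor_singleObj [Finite (Quiver.Total (Generators G))] :
    Nat.card (G ⥤ SingleObj X) = Nat.card X ^ Nat.card (Quiver.Total (Generators G)) := by
  rw [Nat.card_congr (functorEquivLabelling.trans (Quiver.labellingEquivTotal _ X)), Nat.card_fun]

end IsFreeGroupoid

noncomputable def CategoryTheory.ActionCategory.totalGeneratorsEquiv (F A : Type u) [Group F]
    [IsFreeGroup F] [MulAction F A] :
    Quiver.Total (IsFreeGroupoid.Generators (ActionCategory F A)) ≃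
      IsFreeGroup.Generators F × A where
  toFun t := (t.hom.val, t.left.back)
  invFun x := ⟨(x.2 : ActionCategory F A),
    ((IsFreeGroup.of x.1 • x.2 : A) : ActionCategory F A), ⟨x.1, rfl⟩⟩
  left_inv := by
    rintro ⟨⟨⟨⟩, a : A⟩, ⟨⟨⟩, b : A⟩, ⟨x, h : IsFreeGroup.of x • a = b⟩⟩
    obtain rfl := h
    rfl
  right_inv _ := rfl

theorem Subgroup.card_monoidHom_mul_pow_index {F : Type u} [Group F] [IsFreeGroup F]
    [Finite (IsFreeGroup.Generators F)] (M : Subgroup F) [M.FiniteIndex] (X : Type u) [Group X]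
    [Finite X] :
    Nat.card (M →* X) * Nat.card X ^ (M.index - 1) =
      Nat.card X ^ (Nat.card (IsFreeGroup.Generators F) * M.index) := by
  let r : ActionCategory F (F ⧸ M) := ActionCategory.objEquiv F (F ⧸ M) ↑(1 : F)
  have : Finite (ActionCategory F (F ⧸ M)) := .of_equiv _ (ActionCategory.objEquiv F (F ⧸ M))
  have : Finite (Quiver.Total (IsFreeGroupoid.Generators (ActionCategory F (F ⧸ M)))) :=
    .of_equiv _ (ActionCategory.totalGeneratorsEquiv F (F ⧸ M)).symm
  -- the library instance is stated for the category structure of `ActionCategory`, not for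
  -- the one induced by its groupoid structure
  have : @IsConnected (ActionCategory F (F ⧸ M)) Groupoid.toCategory :=
    (inferInstance : IsConnected (ActionCategory F (F ⧸ M)))
  have hobj : Nat.card (ActionCategory F (F ⧸ M)) = M.index :=
    (Nat.card_congr (ActionCategory.objEquiv F (F ⧸ M))).symm
  have hcount := card_functor_singleObj_of_isConnected (X := X) r
  rw [IsFreeGroupoid.card_functor_singleObj,
    Nat.card_congr (ActionCategory.totalGeneratorsEquiv F _), Nat.card_prod, hobj] at hcount
  rw [← Nat.card_congr (MulEquiv.monoidHomCongrLeftEquiv (ActionCategory.endMulEquivSubgroup M))]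
  exact hcount.symm

/-- **Gaschütz / Nielsen–Schreier.** If `ψ` is a surjection from the free group of rank `e`
onto a finite group `H` of order `m`, with kernel `M`, then `M ⧸ M_p` is an elementary
abelian `p`-group of order `p ^ (1 + (e-1)m)`. -/
theorem stmt_4 (e p : ℕ) (he : 0 < e) (hp : p.Prime) (H : Type) [Group H] [Finite H]
    (ψ : FreeGroup (Fin e) →* H) (hψ : Function.Surjective ψ) :
    (∀ a b : ψ.ker ⧸ (subgroupP p ψ.ker).subgroupOf ψ.ker, a * b = b * a) ∧
    (∀ a : ψ.ker ⧸ (subgroupP p ψ.ker).subgroupOf ψ.ker, a ^ p = 1) ∧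
    Nat.card (ψ.ker ⧸ (subgroupP p ψ.ker).subgroupOf ψ.ker)
      = p ^ (1 + (e - 1) * Nat.card H) := by
  let q := QuotientGroup.quotientMulEquivOfEq (subgroupP_subgroupOf p ψ.ker)
  refine ⟨fun a b => q.injective (by simp only [map_mul, mul_comm]),
    fun a => q.injective (by rw [map_pow, map_one, quotient_subgroupP_pow_eq_one]), ?_⟩
  have hindex : ψ.ker.index = Nat.card H := by
    rw [Subgroup.index_ker, MonoidHom.range_eq_top_of_surjective _ hψ, Subgroup.card_top]
  let rankEquiv := Equiv.ofFreeGroupEquiv (IsFreeGroup.toFreeGroup (FreeGroup (Fin e)))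
  have : Finite (IsFreeGroup.Generators (FreeGroup (Fin e))) := .of_equiv _ rankEquiv
  have : NeZero p := ⟨hp.ne_zero⟩
  have hcount := Subgroup.card_monoidHom_mul_pow_index ψ.ker (Multiplicative (ZMod p))
  rw [hindex, ← Nat.card_congr rankEquiv, Nat.card_fin, Nat.card_congr Multiplicative.toAdd,
    Nat.card_zmod] at hcount
  have hexp : e * Nat.card H = (1 + (e - 1) * Nat.card H) + (Nat.card H - 1) := by
    obtain ⟨e, rfl⟩ := Nat.exists_eq_add_one_of_ne_zero he.ne'
    obtain ⟨m, hm⟩ := Nat.exists_eq_add_one_of_ne_zero (Nat.card_pos (α := H)).ne'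
    rw [hm, Nat.add_sub_cancel, Nat.add_sub_cancel]
    ring
  rw [hexp, pow_add] at hcount
  rw [Nat.card_congr q.toEquiv, IsFreeGroup.card_quotient_subgroupP]
  exact Nat.eq_of_mul_eq_mul_right (pow_pos hp.pos _) hcount
end
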